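/- Let A, B ∈ GL(2,Z) with A² = −Id, spec(B) = {1, −1}, and the commutator ABA⁻¹B⁻¹ = −Id. Then there is a matrix P ∈ GL(2,Q) such that P B P⁻¹ = diag(1,−1) and P A P⁻¹ is the rotation matrix [[0,1],[−1,0]] or [[0,−1],[1,0]]. -/
import Mathlib


/-- If `A, B ∈ GL(2,ℤ)` satisfy `A² = -Id`, `spec(B) = {1,-1}` and
`ABA⁻¹B⁻¹ = -Id`, then over `ℚ` we may simultaneously conjugate `B` to
`diag(1,-1)` and `A` to a rotation matrix `[[0,1],[-1,0]]` or `[[0,-1],[1,0]]`. -/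
theorem simultaneous_normal_form_GL2Z
    (A B : Matrix (Fin 2) (Fin 2) ℤ) (hA : IsUnit A.det) (hB : IsUnit B.det)
    (hA2 : A ^ 2 = -1)
    (hspec : spectrum ℚ (B.map (Int.cast : ℤ → ℚ)) = {1, -1})
    (hcomm : A * B * A⁻¹ * B⁻¹ = -1) :
    ∃ P : Matrix (Fin 2) (Fin 2) ℚ, IsUnit P.det ∧
      P * B.map (Int.cast : ℤ → ℚ) * P⁻¹ = Matrix.diagonal ![1, -1] ∧
      (P * A.map (Int.cast : ℤ → ℚ) * P⁻¹ = !![0, 1; -1, 0] ∨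
       P * A.map (Int.cast : ℤ → ℚ) * P⁻¹ = !![0, -1; 1, 0]) := by
  classical
  set f : ℤ →+* ℚ := Int.castRingHom ℚ with hf
  set A' : Matrix (Fin 2) (Fin 2) ℚ := A.map (Int.cast : ℤ → ℚ) with hA'
  set B' : Matrix (Fin 2) (Fin 2) ℚ := B.map (Int.cast : ℤ → ℚ) with hB'
  -- anticommutation over ℤ
  have hAi : A⁻¹ * A = 1 := Matrix.nonsing_inv_mul A hA
  have hBi : B⁻¹ * B = 1 := Matrix.nonsing_inv_mul B hB
  have hanti : A * B = -(B * A) := by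
    have h1 : A * B * A⁻¹ = -B := by
      have : A * B * A⁻¹ = A * B * A⁻¹ * B⁻¹ * B := by
        rw [mul_assoc (A * B * A⁻¹), hBi, mul_one]
      rw [this, hcomm, neg_one_mul]
    have h2 : A * B = A * B * (A⁻¹ * A) := by rw [hAi, mul_one]
    rw [h2, ← mul_assoc, h1, neg_mul]
  -- transfer to ℚ
  have hanti' : A' * B' = -(B' * A') := by
    ext i j
    have h := congrFun (congrFun hanti i) j
    simp only [Matrix.mul_apply, Matrix.neg_apply, Fin.sum_univ_two] at h
    simp only [hA', hB', Matrix.mul_apply, Matrix.neg_apply, Fin.sum_univ_two,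
      Matrix.map_apply]
    exact_mod_cast h
  have hA2' : A' * A' = -1 := by
    have h2 : A * A = -1 := by rw [← pow_two]; exact hA2
    ext i j
    have h := congrFun (congrFun h2 i) j
    simp only [Matrix.mul_apply, Matrix.neg_apply, Matrix.one_apply,
      Fin.sum_univ_two] at h
    simp only [hA', Matrix.mul_apply, Matrix.neg_apply, Matrix.one_apply,
      Fin.sum_univ_two, Matrix.map_apply]
    by_cases hij : i = j <;> simp [hij] at h ⊢ <;> exact_mod_cast h
  -- eigenvector of B' for eigenvalue 1
  have h1spec : (1 : ℚ) ∈ spectrum ℚ B' := by rw [hspec]; exact Set.mem_insert 1 {-1}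
  have hdet0 : (1 - B').det = 0 := by
    have := spectrum.mem_iff.mp h1spec
    have h1 : algebraMap ℚ (Matrix (Fin 2) (Fin 2) ℚ) 1 = 1 := map_one _
    rw [h1] at this
    by_contra h
    exact this ((Matrix.isUnit_iff_isUnit_det _).mpr (isUnit_iff_ne_zero.mpr h))
  obtain ⟨v, hv0, hv⟩ := (Matrix.exists_mulVec_eq_zero_iff).mpr hdet0
  have hBv : B'.mulVec v = v := by
    have := hv
    rw [Matrix.sub_mulVec, Matrix.one_mulVec, sub_eq_zero] at this
    exact this.symm
  set w : Fin 2 → ℚ := A'.mulVec v with hw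
  have hBA : B' * A' = -(A' * B') := by rw [hanti', neg_neg]
  have hBw : B'.mulVec w = -w := by
    rw [hw, Matrix.mulVec_mulVec, hBA, Matrix.neg_mulVec, ← Matrix.mulVec_mulVec, hBv]
  have hAw : A'.mulVec w = -v := by
    rw [hw, Matrix.mulVec_mulVec, hA2', Matrix.neg_mulVec, Matrix.one_mulVec]
  have hw0 : w ≠ 0 := by
    intro h
    apply hv0
    have : A'.mulVec w = 0 := by rw [h, Matrix.mulVec_zero]
    rw [hAw] at this
    simpa using (neg_eq_zero.mp this)
  -- the change of basis matrix
  set Q : Matrix (Fin 2) (Fin 2) ℚ := !![v 0, w 0; v 1, w 1] with hQ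
  set D : Matrix (Fin 2) (Fin 2) ℚ := Matrix.diagonal ![1, -1] with hD
  set R : Matrix (Fin 2) (Fin 2) ℚ := !![0, -1; 1, 0] with hR
  have hBv0 := congrFun hBv 0
  have hBv1 := congrFun hBv 1
  have hBw0 := congrFun hBw 0
  have hBw1 := congrFun hBw 1
  have hAv0 : w 0 = A' 0 0 * v 0 + A' 0 1 * v 1 := by
    rw [hw]; simp [Matrix.mulVec, dotProduct, Fin.sum_univ_two]
  have hAv1 : w 1 = A' 1 0 * v 0 + A' 1 1 * v 1 := by
    rw [hw]; simp [Matrix.mulVec, dotProduct, Fin.sum_univ_two]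
  have hAw0 := congrFun hAw 0
  have hAw1 := congrFun hAw 1
  simp [Matrix.mulVec, dotProduct, Fin.sum_univ_two] at hBv0 hBv1 hBw0 hBw1 hAw0 hAw1
  have hBQ : B' * Q = Q * D := by
    ext i j
    fin_cases i <;> fin_cases j <;>
      simp [hQ, hD, Matrix.mul_apply, Fin.sum_univ_two, Matrix.diagonal] <;>
      linarith [hBv0, hBv1, hBw0, hBw1]
  have hAQ : A' * Q = Q * R := by
    ext i j
    fin_cases i <;> fin_cases j <;>
      simp [hQ, hR, Matrix.mul_apply, Fin.sum_univ_two] <;>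
      linarith [hAv0, hAv1, hAw0, hAw1]
  -- Q is invertible
  have hdetQ : Q.det ≠ 0 := by
    intro hdet
    obtain ⟨u, hu0, hu⟩ := (Matrix.exists_mulVec_eq_zero_iff).mpr hdet
    have hQD : Q.mulVec (D.mulVec u) = 0 := by
      rw [Matrix.mulVec_mulVec, ← hBQ, ← Matrix.mulVec_mulVec, hu, Matrix.mulVec_zero]
    have hu0' := congrFun hu 0
    have hu1' := congrFun hu 1
    have hQD0 := congrFun hQD 0
    have hQD1 := congrFun hQD 1
    simp [hQ, hD, Matrix.mulVec, dotProduct, Fin.sum_univ_two, Matrix.diagonal] at hu0' hu1' hQD0 hQD1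
    have hu00 : u 0 = 0 := by
      by_contra h
      apply hv0
      funext i
      fin_cases i
      · have : u 0 * v 0 = 0 := by linarith
        simpa [h] using mul_eq_zero.mp this
      · have : u 0 * v 1 = 0 := by linarith
        simpa [h] using mul_eq_zero.mp this
    have hu10 : u 1 = 0 := by
      by_contra h
      apply hw0
      funext i
      fin_cases i
      · have : u 1 * w 0 = 0 := by rw [hu00] at hu0'; linarith
        simpa [h] using mul_eq_zero.mp this
      · have : u 1 * w 1 = 0 := by rw [hu00] at hu1'; linarith
        simpa [h] using mul_eq_zero.mp this
    apply hu0
    funext i; fin_cases i <;> simp [hu00, hu10]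
  have hQu : IsUnit Q.det := isUnit_iff_ne_zero.mpr hdetQ
  have hQinv : Q⁻¹ * Q = 1 := Matrix.nonsing_inv_mul Q hQu
  have hQQ : Q⁻¹⁻¹ = Q := Matrix.nonsing_inv_nonsing_inv Q hQu
  refine ⟨Q⁻¹, ?_, ?_, Or.inr ?_⟩
  · exact Q.isUnit_nonsing_inv_det hQu
  · rw [hQQ, mul_assoc, hBQ, ← mul_assoc, hQinv, one_mul]
  · rw [hQQ, mul_assoc, hAQ, ← mul_assoc, hQinv, one_mul]
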